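/- arXiv:1306.6436 — 8 statements merged into one kernel-verified Lean document; each statement's English description precedes it below -/
import Mathlib

section
/- If a graph G admits a graph derangement, then G admits a surjective graph derangement. -/
/-- If a graph admits a graph derangement, it admits a surjective graph derangement. -/
theorem surjective_derangement_of_derangement {V : Type*} (G : SimpleGraph V)
    (h : ∃ f : V → V, Function.Injective f ∧ ∀ v : V, G.Adj v (f v)) :
    ∃ f : V → V, Function.Bijective f ∧ ∀ v : V, G.Adj v (f v) := by
  obtain ⟨f, hf, hadj⟩ := h
  exact Function.Embedding.schroeder_bernstein_of_rel hf hf G.Adj hadj fun v ↦ (hadj v).symm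
end

section
/- (Halls' theorem, infinite marriage form) Let G = (V1, V2, E) be a bipartitioned graph in which every vertex of V1 has finite degree. Then there exists an injection ι: V1 → V2 with x adjacent to ι(x) for all x ∈ V1 if and only if for every finite subset X ⊆ V1, #X ≤ #N(X). -/
/-!
Hall's theorem for finite `V₁` extends to infinite `V₁` with finite neighbourhoods by
compactness: the matchings of the finite subsets of `V₁` form an inverse system of nonempty
finite sets, whose inverse limit is nonempty. Mathlib carries this out in
`Finset.all_card_le_biUnion_card_iff_exists_injective` for finset-valued neighbourhoods.
-/

theorem ncard_setOf_exists_rel_eq_card_biUnion {α β : Type*} [DecidableEq β] (r : α → β → Prop)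
    (hr : ∀ x, {y | r x y}.Finite) (X : Finset α) :
    {y | ∃ x ∈ X, r x y}.ncard = (X.biUnion fun x => (hr x).toFinset).card := by
  rw [← Set.ncard_coe_finset]
  congr
  ext y
  simp

/-- Halls' theorem, infinite marriage form: for a bipartitioned graph in which every
vertex of `V₁` has finitely many neighbors, a semiperfect matching exists iff the
Hall condition holds for all finite subsets of `V₁`. -/
theorem hall_marriage_infinite {V₁ V₂ : Type*} (r : V₁ → V₂ → Prop)
    (hlf : ∀ x : V₁, Set.Finite {y : V₂ | r x y}) :
    (∃ ι : V₁ → V₂, Function.Injective ι ∧ ∀ x : V₁, r x (ι x)) ↔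
      ∀ X : Finset V₁, X.card ≤ Set.ncard {y : V₂ | ∃ x ∈ X, r x y} := by
  classical
  simp only [ncard_setOf_exists_rel_eq_card_biUnion r hlf,
    Finset.all_card_le_biUnion_card_iff_exists_injective, Set.Finite.mem_toFinset, Set.mem_ofPred_eq]
end

section
/- Let G be a locally finite graph. If for every finite subset X of vertices #X ≤ #N(X), then G admits a graph derangement. -/
namespace SimpleGraph

variable {V : Type*} (G : SimpleGraph V) [G.LocallyFinite]

theorem coe_biUnion_neighborFinset [DecidableEq V] (s : Finset V) :
    (s.biUnion (G.neighborFinset ·) : Set V) = {y | ∃ x ∈ s, G.Adj x y} := by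
  ext y
  simp

theorem exists_injective_adj_of_card_le_ncard_neighbors
    (h : ∀ s : Finset V, s.card ≤ {y | ∃ x ∈ s, G.Adj x y}.ncard) :
    ∃ f : V → V, Function.Injective f ∧ ∀ v, G.Adj v (f v) := by
  classical
  have hall : ∀ s : Finset V, s.card ≤ (s.biUnion (G.neighborFinset ·)).card := fun s => by
    simpa only [← coe_biUnion_neighborFinset, Set.ncard_coe_finset] using h s
  -- Hall's theorem for infinite families holds when every set is finite (a compactness argument).
  obtain ⟨f, hinj, hf⟩ :=
    (Finset.all_card_le_biUnion_card_iff_exists_injective (G.neighborFinset ·)).mp hall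
  exact ⟨f, hinj, fun v => (G.mem_neighborFinset v (f v)).mp (hf v)⟩

end SimpleGraph

/-- If `G` is locally finite and the Hall condition holds for all finite vertex subsets,
then `G` admits a graph derangement. -/
theorem derangement_of_hall_condition {V : Type*} (G : SimpleGraph V)
    (hlf : ∀ v : V, Set.Finite (G.neighborSet v))
    (hhall : ∀ X : Finset V, X.card ≤ Set.ncard {y : V | ∃ x ∈ X, G.Adj x y}) :
    ∃ f : V → V, Function.Injective f ∧ ∀ v : V, G.Adj v (f v) := by
  have : G.LocallyFinite := fun v => (hlf v).fintype
  exact G.exists_injective_adj_of_card_le_ncard_neighbors hhall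
end

section
/- Let G be a locally finite graph and suppose there is a finite subset X of vertices with #X > #N(X). Then there is an independent subset Y ⊆ X with #Y > #N(Y). -/
/-!
Let `Y ⊆ X` be the vertices of `X` with no neighbour in `X`; it is independent. Every vertex of
`X \ Y` lies in `N(X)`, while `N(Y)` lies in `N(X)` and misses `X`, so
`#N(Y) + #(X \ Y) ≤ #N(X) < #X = #Y + #(X \ Y)`.
-/

open Finset

namespace SimpleGraph

variable {V : Type*} (G : SimpleGraph V)

theorem finite_setOf_exists_adj (hlf : ∀ v, (G.neighborSet v).Finite) (X : Finset V) :
    {y | ∃ x ∈ X, G.Adj x y}.Finite :=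
  (X.finite_toSet.biUnion fun x _ => hlf x).subset fun _ ⟨_, hx, hxy⟩ =>
    Set.mem_biUnion (Finset.mem_coe.2 hx) hxy

theorem ncard_setOf_exists_adj_add_card_sdiff_le [DecidableEq V] {X Y : Finset V}
    (hfin : {v | ∃ x ∈ X, G.Adj x v}.Finite) (hYX : Y ⊆ X)
    (hcov : ∀ x ∈ X \ Y, ∃ z ∈ X, G.Adj z x) (hY : ∀ y ∈ Y, ∀ z ∈ X, ¬ G.Adj y z) :
    {v | ∃ y ∈ Y, G.Adj y v}.ncard + #(X \ Y) ≤ {v | ∃ x ∈ X, G.Adj x v}.ncard := by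
  have hNY : {v | ∃ y ∈ Y, G.Adj y v} ⊆ {v | ∃ x ∈ X, G.Adj x v} :=
    fun v ⟨y, hy, hyv⟩ => ⟨y, hYX hy, hyv⟩
  have hsub : {v | ∃ y ∈ Y, G.Adj y v} ∪ ↑(X \ Y) ⊆ {v | ∃ x ∈ X, G.Adj x v} :=
    Set.union_subset hNY fun x hx => hcov x hx
  have hdisj : Disjoint {v | ∃ y ∈ Y, G.Adj y v} ↑(X \ Y) :=
    Set.disjoint_left.2 fun v ⟨y, hy, hyv⟩ hv => hY y hy v (mem_sdiff.1 hv).1 hyv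
  calc {v | ∃ y ∈ Y, G.Adj y v}.ncard + #(X \ Y)
      = ({v | ∃ y ∈ Y, G.Adj y v} ∪ ↑(X \ Y)).ncard := by
        rw [Set.ncard_union_eq hdisj (hfin.subset hNY) (finite_toSet _), Set.ncard_coe_finset]
    _ ≤ {v | ∃ x ∈ X, G.Adj x v}.ncard := Set.ncard_le_ncard hsub hfin

theorem exists_independent_subset_ncard_lt {X : Finset V}
    (hfin : {y | ∃ x ∈ X, G.Adj x y}.Finite) (hX : {y | ∃ x ∈ X, G.Adj x y}.ncard < #X) :
    ∃ Y ⊆ X, (∀ x ∈ Y, ∀ y ∈ Y, ¬ G.Adj x y) ∧ {y | ∃ x ∈ Y, G.Adj x y}.ncard < #Y := by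
  classical
  set Y := {x ∈ X | ∀ z ∈ X, ¬ G.Adj x z}
  have hYX : Y ⊆ X := filter_subset _ _
  have hY : ∀ y ∈ Y, ∀ z ∈ X, ¬ G.Adj y z := fun y hy => (mem_filter.1 hy).2
  have hcov : ∀ x ∈ X \ Y, ∃ z ∈ X, G.Adj z x := by
    intro x hx
    obtain ⟨hxX, hxY⟩ := mem_sdiff.1 hx
    obtain ⟨z, hz, hxz⟩ : ∃ z ∈ X, G.Adj x z := by simpa [Y, hxX] using hxY
    exact ⟨z, hz, hxz.symm⟩
  have hcount := G.ncard_setOf_exists_adj_add_card_sdiff_le hfin hYX hcov hY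
  have hsplit : #(X \ Y) + #Y = #X := card_sdiff_add_card_eq_card hYX
  exact ⟨Y, hYX, fun x hx y hy => hY x hx y (hYX hy), by omega⟩

end SimpleGraph

/-- If a locally finite graph has a finite set `X` with `#X > #N(X)`, then it has an
independent subset `Y ⊆ X` with `#Y > #N(Y)`. -/
theorem independent_hall_violator {V : Type*} (G : SimpleGraph V)
    (hlf : ∀ v : V, Set.Finite (G.neighborSet v))
    (X : Finset V) (hX : Set.ncard {y : V | ∃ x ∈ X, G.Adj x y} < X.card) :
    ∃ Y : Finset V, Y ⊆ X ∧ (∀ x ∈ Y, ∀ y ∈ Y, ¬ G.Adj x y) ∧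
      Set.ncard {y : V | ∃ x ∈ Y, G.Adj x y} < Y.card :=
  G.exists_independent_subset_ncard_lt (G.finite_setOf_exists_adj hlf X) hX
end

section
/- (First Existence Theorem, Tutte 1953) A locally finite graph G admits a surjective graph derangement if and only if for every finite independent set X of vertices, #X ≤ #N(X). -/
/-!
Hall's theorem for the locally finite family of neighbourhoods gives an injection `f` with
`f v` adjacent to `v` once `#X ≤ #N(X)` holds for all finite `X`. For a finite `X`, the set `B`
of vertices of `X` with no neighbour in `X` is independent, `N(B)` avoids `X` and
`X \ B ⊆ N(X)`, so the condition on independent sets suffices. Schröder–Bernstein applied to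
`f` against itself then produces a bijection along edges, since adjacency is symmetric.
-/

open Finset

namespace SimpleGraph

variable {V : Type*} {G : SimpleGraph V}

theorem exists_bijective_adj_of_injective {f : V → V} (hf : Function.Injective f)
    (hadj : ∀ v, G.Adj v (f v)) : ∃ g : V → V, Function.Bijective g ∧ ∀ v, G.Adj v (g v) :=
  Function.Embedding.schroeder_bernstein_of_rel hf hf G.Adj hadj fun v => (hadj v).symm

variable [G.LocallyFinite] [DecidableEq V]

theorem ncard_setOf_exists_adj_eq_card_biUnion (X : Finset V) :
    {y : V | ∃ x ∈ X, G.Adj x y}.ncard = #(X.biUnion (G.neighborFinset ·)) := by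
  rw [← Set.ncard_coe_finset]
  congr 1
  ext y
  simp

theorem card_le_card_biUnion_of_injective_adj {f : V → V} (hf : Function.Injective f)
    (hadj : ∀ v, G.Adj v (f v)) (X : Finset V) : #X ≤ #(X.biUnion (G.neighborFinset ·)) :=
  card_le_card_of_injOn f
    (fun x hx => mem_biUnion.2 ⟨x, hx, (G.mem_neighborFinset _ _).2 (hadj x)⟩) hf.injOn

theorem card_le_card_biUnion_of_isIndepSet
    (hindep : ∀ X : Finset V, G.IsIndepSet X → #X ≤ #(X.biUnion (G.neighborFinset ·)))
    (X : Finset V) : #X ≤ #(X.biUnion (G.neighborFinset ·)) := by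
  set N := X.biUnion (G.neighborFinset ·)
  set B := X.filter (· ∉ N)
  set NB := B.biUnion (G.neighborFinset ·)
  have hB : G.IsIndepSet B := fun x hx y hy _ hxy => by
    simp only [mem_coe, mem_filter, B] at hx hy
    exact hy.2 (mem_biUnion.2 ⟨x, hx.1, (G.mem_neighborFinset _ _).2 hxy⟩)
  have hXB : X \ B ⊆ N := fun x hx => by
    simp only [mem_sdiff, mem_filter, not_and, not_not, B] at hx
    exact hx.2 hx.1
  have hNB : NB ⊆ N := biUnion_subset_biUnion_of_subset_left _ (filter_subset _ _)
  have hdisj : Disjoint (X \ B) NB := by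
    refine Finset.disjoint_left.2 fun x hx hxNB => ?_
    obtain ⟨b, hb, hbx⟩ := mem_biUnion.1 hxNB
    have hxb : G.Adj x b := ((G.mem_neighborFinset _ _).1 hbx).symm
    exact (mem_filter.1 hb).2
      (mem_biUnion.2 ⟨x, (mem_sdiff.1 hx).1, (G.mem_neighborFinset _ _).2 hxb⟩)
  calc #X = #(X \ B) + #B := (card_sdiff_add_card_eq_card (filter_subset _ _)).symm
    _ ≤ #(X \ B) + #NB := Nat.add_le_add_left (hindep B hB) _
    _ = #((X \ B) ∪ NB) := (card_union_of_disjoint hdisj).symm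
    _ ≤ #N := card_le_card (union_subset hXB hNB)

theorem exists_injective_adj_of_card_le_card_biUnion
    (hhall : ∀ X : Finset V, #X ≤ #(X.biUnion (G.neighborFinset ·))) :
    ∃ f : V → V, Function.Injective f ∧ ∀ v, G.Adj v (f v) := by
  obtain ⟨f, hf, hmem⟩ :=
    (all_card_le_biUnion_card_iff_exists_injective (G.neighborFinset ·)).1 hhall
  exact ⟨f, hf, fun v => (G.mem_neighborFinset _ _).1 (hmem v)⟩

end SimpleGraph

/-- First Existence Theorem (Tutte, 1953): a locally finite graph admits a surjective
graph derangement iff every finite independent set `X` satisfies `#X ≤ #N(X)`. -/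
theorem first_existence_theorem {V : Type*} (G : SimpleGraph V)
    (hlf : ∀ v : V, Set.Finite (G.neighborSet v)) :
    (∃ f : V → V, Function.Bijective f ∧ ∀ v : V, G.Adj v (f v)) ↔
      ∀ X : Finset V, (∀ x ∈ X, ∀ y ∈ X, ¬ G.Adj x y) →
        X.card ≤ Set.ncard {y : V | ∃ x ∈ X, G.Adj x y} := by
  classical
  let : G.LocallyFinite := fun v => (hlf v).fintype
  simp only [SimpleGraph.ncard_setOf_exists_adj_eq_card_biUnion]
  constructor
  · rintro ⟨f, hf, hadj⟩ X -
    exact SimpleGraph.card_le_card_biUnion_of_injective_adj hf.1 hadj X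
  · intro hindep
    have hhall := SimpleGraph.card_le_card_biUnion_of_isIndepSet fun X hX =>
      hindep X fun x hx y hy hxy => hX hx hy (G.ne_of_adj hxy) hxy
    obtain ⟨f, hf, hadj⟩ := SimpleGraph.exists_injective_adj_of_card_le_card_biUnion hhall
    exact SimpleGraph.exists_bijective_adj_of_injective hf hadj
end

section
/- (König/Cantor–Bernstein for matchings) Let G = (V1, V2, E) be a bipartitioned graph (not necessarily locally finite). If there exist injections ι1: V1 → V2 and ι2: V2 → V1 with x ~ ι1(x) for all x ∈ V1 and y ~ ι2(y) for all y ∈ V2, then there exists a bijection f: V1 → V2 with x ~ f(x) for all x ∈ V1. -/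
/-- König/Cantor–Bernstein for matchings: if a bipartitioned graph admits
semiderangements in both directions, it admits a perfect matching. -/
theorem konig_cantor_bernstein_matching {V₁ V₂ : Type*} (r : V₁ → V₂ → Prop)
    (ι₁ : V₁ → V₂) (h₁ : Function.Injective ι₁) (hr₁ : ∀ x : V₁, r x (ι₁ x))
    (ι₂ : V₂ → V₁) (h₂ : Function.Injective ι₂) (hr₂ : ∀ y : V₂, r (ι₂ y) y) :
    ∃ f : V₁ → V₂, Function.Bijective f ∧ ∀ x : V₁, r x (f x) :=
  Function.Embedding.schroeder_bernstein_of_rel h₁ h₂ r hr₁ hr₂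
end

section
/- (Second Existence Theorem) For a locally finite bipartitioned graph G = (V1, V2, E), the following are equivalent: (i) G admits a perfect matching; (ii) G admits a graph derangement; (iii) for every finite subset J of V1 ∪ V2, #J ≤ #N(J). -/
/-!
A derangement of the bipartite graph sends `V₁` injectively into `V₂` and `V₂` injectively
into `V₁` along edges, and by the relational Schröder–Bernstein theorem two such injections
combine into a perfect matching; conversely a perfect matching and its inverse together form a
derangement. A derangement is exactly a system of distinct representatives for the family of
neighbourhoods, which are finite by local finiteness, so the infinite form of Hall's theorem
identifies its existence with the Hall condition.
-/

open Function Set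

theorem all_card_le_ncard_rel_image_iff_exists_injective {α β : Type*} (r : α → β → Prop)
    (hr : ∀ a, {b | r a b}.Finite) :
    (∀ A : Finset α, A.card ≤ {b | ∃ a ∈ A, r a b}.ncard) ↔
      ∃ f : α → β, Injective f ∧ ∀ a, r a (f a) := by
  classical
  have himage (A : Finset α) :
      {b | ∃ a ∈ A, r a b} = ↑(A.biUnion fun a => (hr a).toFinset) := by
    ext; simp
  simp only [himage, ncard_coe_finset]
  convert Finset.all_card_le_biUnion_card_iff_exists_injective (fun a => (hr a).toFinset)
    using 4
  simp

namespace SimpleGraph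

variable {V₁ V₂ : Type*} (r : V₁ → V₂ → Prop)

def bipartiteOfRel : SimpleGraph (V₁ ⊕ V₂) :=
  fromRel fun a b => ∃ x y, a = Sum.inl x ∧ b = Sum.inr y ∧ r x y

variable {r}

@[simp]
lemma bipartiteOfRel_adj_inl_inr {x : V₁} {y : V₂} :
    (bipartiteOfRel r).Adj (.inl x) (.inr y) ↔ r x y := by
  simp [bipartiteOfRel]

@[simp]
lemma bipartiteOfRel_adj_inr_inl {x : V₁} {y : V₂} :
    (bipartiteOfRel r).Adj (.inr y) (.inl x) ↔ r x y := by
  simp [bipartiteOfRel]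

@[simp]
lemma not_bipartiteOfRel_adj_inl_inl {x x' : V₁} :
    ¬ (bipartiteOfRel r).Adj (.inl x) (.inl x') := by
  simp [bipartiteOfRel]

@[simp]
lemma not_bipartiteOfRel_adj_inr_inr {y y' : V₂} :
    ¬ (bipartiteOfRel r).Adj (.inr y) (.inr y') := by
  simp [bipartiteOfRel]

lemma neighborSet_bipartiteOfRel_inl (x : V₁) :
    (bipartiteOfRel r).neighborSet (.inl x) = .inr '' {y | r x y} := by
  ext (x' | y) <;> simp

lemma neighborSet_bipartiteOfRel_inr (y : V₂) :
    (bipartiteOfRel r).neighborSet (.inr y) = .inl '' {x | r x y} := by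
  ext (x | y') <;> simp

lemma finite_neighborSet_bipartiteOfRel (h₁ : ∀ x, {y | r x y}.Finite)
    (h₂ : ∀ y, {x | r x y}.Finite) (v : V₁ ⊕ V₂) :
    ((bipartiteOfRel r).neighborSet v).Finite := by
  rcases v with x | y
  · simpa [neighborSet_bipartiteOfRel_inl] using (h₁ x).image Sum.inr
  · simpa [neighborSet_bipartiteOfRel_inr] using (h₂ y).image Sum.inl

lemma exists_eq_inr_of_bipartiteOfRel_adj {x : V₁} {w : V₁ ⊕ V₂}
    (h : (bipartiteOfRel r).Adj (.inl x) w) : ∃ y, w = .inr y ∧ r x y := by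
  rcases w with x' | y <;> simp_all

lemma exists_eq_inl_of_bipartiteOfRel_adj {y : V₂} {w : V₁ ⊕ V₂}
    (h : (bipartiteOfRel r).Adj (.inr y) w) : ∃ x, w = .inl x ∧ r x y := by
  rcases w with x | y' <;> simp_all

theorem exists_injective_bipartiteOfRel_adj_of_bijective {f : V₁ → V₂} (hf : Bijective f)
    (hfr : ∀ x, r x (f x)) :
    ∃ g : V₁ ⊕ V₂ → V₁ ⊕ V₂, Injective g ∧
      ∀ v, (bipartiteOfRel r).Adj v (g v) := by
  let e := Equiv.ofBijective f hf
  refine ⟨(e.sumCongr e.symm).trans (Equiv.sumComm V₂ V₁), Equiv.injective _, ?_⟩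
  rintro (x | y)
  · simpa [e] using hfr x
  · obtain ⟨x, rfl⟩ := hf.surjective y
    simpa [e] using hfr x

theorem exists_bijective_of_injective_bipartiteOfRel_adj {g : V₁ ⊕ V₂ → V₁ ⊕ V₂}
    (hg : Injective g) (hadj : ∀ v, (bipartiteOfRel r).Adj v (g v)) :
    ∃ f : V₁ → V₂, Bijective f ∧ ∀ x, r x (f x) := by
  choose f hf hfr using fun x => exists_eq_inr_of_bipartiteOfRel_adj (hadj (.inl x))
  choose f' hf' hfr' using fun y => exists_eq_inl_of_bipartiteOfRel_adj (hadj (.inr y))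
  have hf_inj : Injective f := fun x x' h =>
    Sum.inl_injective <| hg <| by rw [hf, hf, h]
  have hf'_inj : Injective f' := fun y y' h =>
    Sum.inr_injective <| hg <| by rw [hf', hf', h]
  exact Embedding.schroeder_bernstein_of_rel hf_inj hf'_inj r hfr hfr'

end SimpleGraph

/-- Second Existence Theorem: for a locally finite bipartitioned graph the existence of
a perfect matching, the existence of a graph derangement, and the Hall condition for
all finite subsets of the vertex set are equivalent. -/
theorem second_existence_theorem {V₁ V₂ : Type*} (r : V₁ → V₂ → Prop)
    (hlf₁ : ∀ x : V₁, Set.Finite {y : V₂ | r x y})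
    (hlf₂ : ∀ y : V₂, Set.Finite {x : V₁ | r x y}) :
    letI G : SimpleGraph (V₁ ⊕ V₂) :=
      SimpleGraph.fromRel (fun a b => ∃ x y, a = Sum.inl x ∧ b = Sum.inr y ∧ r x y)
    ((∃ f : V₁ → V₂, Function.Bijective f ∧ ∀ x : V₁, r x (f x)) ↔
        (∃ g : V₁ ⊕ V₂ → V₁ ⊕ V₂, Function.Injective g ∧ ∀ v, G.Adj v (g v))) ∧
    ((∃ g : V₁ ⊕ V₂ → V₁ ⊕ V₂, Function.Injective g ∧ ∀ v, G.Adj v (g v)) ↔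
        ∀ J : Finset (V₁ ⊕ V₂), J.card ≤ Set.ncard {w : V₁ ⊕ V₂ | ∃ v ∈ J, G.Adj v w}) := by
  have hlf := SimpleGraph.finite_neighborSet_bipartiteOfRel hlf₁ hlf₂
  refine ⟨⟨fun ⟨_, hf, hfr⟩ => ?_, fun ⟨_, hg, hadj⟩ => ?_⟩,
    (all_card_le_ncard_rel_image_iff_exists_injective _ hlf).symm⟩
  · exact SimpleGraph.exists_injective_bipartiteOfRel_adj_of_bijective hf hfr
  · exact SimpleGraph.exists_bijective_of_injective_bipartiteOfRel_adj hg hadj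
end

section
/- The checkerboard graph R_{m,n} admits a graph derangement if and only if at least one of m and n is even. -/
/-!
The checkerboard graph is the box product of two paths. Colour it like a chessboard: a
derangement is a bijection sending black squares to white ones and white squares to black ones,
so the two colour classes have the same size and `m * n` is even. Conversely, if `m` is even,
swapping rows `2i` and `2i + 1` is a derangement.
-/

open Function

namespace SimpleGraph

variable {V W : Type*}

def IsDerangement (G : SimpleGraph V) (f : V → V) : Prop :=
  Injective f ∧ ∀ v, G.Adj v (f v)

theorem IsDerangement.even_card [Fintype V] {G : SimpleGraph V} {f : V → V}
    (hf : G.IsDerangement f) (C : G.Coloring Bool) : Even (Fintype.card V) := by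
  have hflip : ∀ v, C (f v) = true ↔ ¬C v = true := fun v => by
    have := C.valid (hf.2 v)
    cases h : C v <;> cases h' : C (f v) <;> simp_all
  have hcard : Fintype.card {v // ¬C v = true} = Fintype.card {v // C v = true} :=
    Fintype.card_congr <|
      (Equiv.ofBijective f (Finite.injective_iff_bijective.mp hf.1)).subtypeEquiv
        fun v => (hflip v).symm
  have := Fintype.card_subtype_le fun v => C v = true
  rw [Fintype.card_subtype_compl] at hcard
  exact ⟨Fintype.card {v // C v = true}, by omega⟩

variable {G : SimpleGraph V} {H : SimpleGraph W}

def Coloring.boxProd (C : G.Coloring Bool) (D : H.Coloring Bool) : (G □ H).Coloring Bool :=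
  Coloring.mk (fun v => xor (C v.1) (D v.2)) <| by
    rintro v w (⟨h, h2⟩ | ⟨h, h1⟩)
    · simpa [h2] using C.valid h
    · simpa [h1] using D.valid h

theorem IsDerangement.boxProd_left {f : V → V} (hf : G.IsDerangement f) :
    (G □ H).IsDerangement (Prod.map f id) :=
  ⟨hf.1.prodMap injective_id, fun v => .inl ⟨hf.2 v.1, rfl⟩⟩

theorem IsDerangement.boxProd_right {g : W → W} (hg : H.IsDerangement g) :
    (G □ H).IsDerangement (Prod.map id g) :=
  ⟨injective_id.prodMap hg.1, fun v => .inr ⟨hg.2 v.2, rfl⟩⟩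

end SimpleGraph

def Fin.swapPairs {n : ℕ} (hn : Even n) (j : Fin n) : Fin n :=
  if h : (j : ℕ) % 2 = 0 then ⟨j + 1, by obtain ⟨k, rfl⟩ := hn; omega⟩ else ⟨j - 1, by omega⟩

theorem Fin.val_swapPairs {n : ℕ} (hn : Even n) (j : Fin n) :
    (Fin.swapPairs hn j : ℕ) = if (j : ℕ) % 2 = 0 then (j : ℕ) + 1 else (j : ℕ) - 1 := by
  unfold Fin.swapPairs; split <;> rfl

theorem Fin.swapPairs_involutive {n : ℕ} (hn : Even n) : Involutive (Fin.swapPairs hn) :=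
  fun j => Fin.ext <| by simp only [Fin.val_swapPairs]; split <;> split <;> omega

namespace SimpleGraph

theorem pathGraph_isDerangement_swapPairs {n : ℕ} (hn : Even n) :
    (pathGraph n).IsDerangement (Fin.swapPairs hn) :=
  ⟨(Fin.swapPairs_involutive hn).injective, fun j => by
    rw [pathGraph_adj, Fin.val_swapPairs]; split <;> omega⟩

theorem fromRel_dist_eq_one_eq_pathGraph_boxProd (m n : ℕ) :
    fromRel (fun a b : Fin m × Fin n =>
      |(a.1 : ℤ) - (b.1 : ℤ)| + |(a.2 : ℤ) - (b.2 : ℤ)| = 1) = pathGraph m □ pathGraph n := by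
  ext a b
  simp only [fromRel_adj, boxProd_adj, pathGraph_adj, ne_eq, Prod.ext_iff, Fin.ext_iff]
  rcases abs_cases ((a.1 : ℤ) - b.1) with ⟨h1, _⟩ | ⟨h1, _⟩ <;>
  rcases abs_cases ((a.2 : ℤ) - b.2) with ⟨h2, _⟩ | ⟨h2, _⟩ <;>
  rcases abs_cases ((b.1 : ℤ) - a.1) with ⟨h3, _⟩ | ⟨h3, _⟩ <;>
  rcases abs_cases ((b.2 : ℤ) - a.2) with ⟨h4, _⟩ | ⟨h4, _⟩ <;>
  rw [h1, h2, h3, h4] <;> omega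

end SimpleGraph

theorem checkerboard_derangement_iff_general (m n : ℕ) :
    (∃ f : Fin m × Fin n → Fin m × Fin n, Function.Injective f ∧
        ∀ v : Fin m × Fin n,
          (SimpleGraph.fromRel (fun a b : Fin m × Fin n =>
            |(a.1 : ℤ) - (b.1 : ℤ)| + |(a.2 : ℤ) - (b.2 : ℤ)| = 1)).Adj v (f v)) ↔
      (Even m ∨ Even n) := by
  change (∃ f, SimpleGraph.IsDerangement _ f) ↔ _
  rw [SimpleGraph.fromRel_dist_eq_one_eq_pathGraph_boxProd]
  constructor
  · rintro ⟨f, hf⟩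
    simpa [Nat.even_mul] using hf.even_card
      ((SimpleGraph.pathGraph.bicoloring m).boxProd (SimpleGraph.pathGraph.bicoloring n))
  · rintro (hm | hn)
    · exact ⟨_, (SimpleGraph.pathGraph_isDerangement_swapPairs hm).boxProd_left⟩
    · exact ⟨_, (SimpleGraph.pathGraph_isDerangement_swapPairs hn).boxProd_right⟩

/-- The checkerboard graph `R_{m,n}` admits a graph derangement iff `m` or `n` is even. -/
theorem checkerboard_derangement_iff (m n : ℕ) (hm : 1 ≤ m) (hn : 1 ≤ n) :
    (∃ f : Fin m × Fin n → Fin m × Fin n, Function.Injective f ∧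
        ∀ v : Fin m × Fin n,
          (SimpleGraph.fromRel (fun a b : Fin m × Fin n =>
            |(a.1 : ℤ) - (b.1 : ℤ)| + |(a.2 : ℤ) - (b.2 : ℤ)| = 1)).Adj v (f v)) ↔
      (Even m ∨ Even n) :=
  checkerboard_derangement_iff_general m n
end
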